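/- arXiv:2107.11493 — 4 statements merged into one kernel-verified Lean document; each statement's English description precedes it below -/
import Mathlib

section
/- Let ρ be a critical radius function and B₀ = B(x₀, r) a ball with ρ(x₀) < r ≤ β ρ(x₀), β > 1. Then there exists a finite family of balls P₁, …, P_N, each of radius δ₀/4 where δ₀ = c_ρ^{-1}(1+2r/ρ(x₀))^{-N₀} ρ(x₀) and with centers in B₀, such that B₀ ⊆ ∪_{i=1}^N P_i, the half-balls (1/2)P_i are pairwise disjoint, and ∑_{i=1}^N χ_{P_i} ≤ 5^d pointwise. -/
open MeasureTheory ENNReal Metric Set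
open scoped Classical

noncomputable section

abbrev Ed (d : ℕ) := EuclideanSpace ℝ (Fin d)

/-- `ρ` is a critical radius function on `ℝ^d` with constants `c ≥ 1` and `N ≥ 1`. -/
def IsCRF {d : ℕ} (ρ : Ed d → ℝ) (c N : ℝ) : Prop :=
  (∀ x, 0 < ρ x) ∧ 1 ≤ c ∧ 1 ≤ N ∧
    ∀ x y : Ed d,
      c⁻¹ * ρ x * (1 + dist x y / ρ x) ^ (-N) ≤ ρ y ∧
      ρ y ≤ c * ρ x * (1 + dist x y / ρ x) ^ (N / (N + 1))

/-- Volume packing bound: a finite `ε`-separated family of points at distance `< R`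
from `z` has at most `K ^ d` elements, provided `R + ε/2 ≤ K * (ε/2)`. -/
lemma card_sep_le {d : ℕ} (S : Finset (Ed d)) (z : Ed d) (R ε : ℝ) (hε : 0 < ε)
    (K : ℕ) (hK0 : 0 < K) (hK : R + ε / 2 ≤ (K : ℝ) * (ε / 2))
    (hS : ∀ p ∈ S, dist p z < R)
    (hsep : ∀ p ∈ S, ∀ q ∈ S, p ≠ q → ε ≤ dist p q) :
    S.card ≤ K ^ d := by
  have hε2 : (0:ℝ) < ε / 2 := by linarith
  have hv0 : volume (ball (0 : Ed d) (ε / 2)) ≠ 0 :=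
    (measure_ball_pos _ _ hε2).ne'
  have hvt : volume (ball (0 : Ed d) (ε / 2)) ≠ ⊤ := measure_ball_lt_top.ne
  have hdisj : (S : Set (Ed d)).PairwiseDisjoint fun p => ball p (ε / 2) := by
    intro p hp q hq hpq
    exact ball_disjoint_ball (by linarith [hsep p hp q hq hpq])
  have hsub : (⋃ p ∈ S, ball p (ε / 2)) ⊆ ball z ((K : ℝ) * (ε / 2)) := by
    intro w hw
    simp only [mem_iUnion, mem_ball] at hw ⊢
    obtain ⟨p, hp, hwp⟩ := hw
    calc dist w z ≤ dist w p + dist p z := dist_triangle _ _ _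
      _ < ε / 2 + R := by linarith [hS p hp]
      _ ≤ (K : ℝ) * (ε / 2) := by linarith
  have key : (S.card : ℝ≥0∞) * volume (ball (0 : Ed d) (ε / 2)) ≤
      ((K : ℝ≥0∞) ^ d) * volume (ball (0 : Ed d) (ε / 2)) := by
    calc (S.card : ℝ≥0∞) * volume (ball (0 : Ed d) (ε / 2))
        = ∑ p ∈ S, volume (ball p (ε / 2)) := by
          rw [Finset.sum_congr rfl fun p _ => Measure.addHaar_ball_center volume p (ε / 2),
            Finset.sum_const, nsmul_eq_mul]
      _ = volume (⋃ p ∈ S, ball p (ε / 2)) :=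
          (measure_biUnion_finset hdisj fun p _ => measurableSet_ball).symm
      _ ≤ volume (ball z ((K : ℝ) * (ε / 2))) := measure_mono hsub
      _ = ENNReal.ofReal ((K : ℝ) ^ Module.finrank ℝ (Ed d)) *
            volume (ball (0 : Ed d) (ε / 2)) := by
          rw [Measure.addHaar_ball_mul_of_pos volume z (by exact_mod_cast hK0)]
      _ = ((K : ℝ≥0∞) ^ d) * volume (ball (0 : Ed d) (ε / 2)) := by
          rw [finrank_euclideanSpace_fin, ENNReal.ofReal_pow (by positivity),
            ENNReal.ofReal_natCast]
  have : (S.card : ℝ≥0∞) ≤ (K : ℝ≥0∞) ^ d :=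
    (ENNReal.mul_le_mul_iff_left hv0 hvt).mp key
  exact_mod_cast this

/-- Covering of a super-critical ball `B₀ = B(x₀,r)` (with `ρ(x₀) < r ≤ βρ(x₀)`) by
finitely many balls of radius `δ₀/4` with centers in `B₀`, whose halves are pairwise
disjoint and whose overlap is at most `5^d`. -/
theorem covering_of_ball {d : ℕ} (ρ : Ed d → ℝ) (c N : ℝ) (hρ : IsCRF ρ c N)
    (β : ℝ) (hβ : 1 < β) (x₀ : Ed d) (r : ℝ) (h₁ : ρ x₀ < r) (h₂ : r ≤ β * ρ x₀) :
    ∃ (n : ℕ) (y : Fin n → Ed d),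
      (∀ i, y i ∈ ball x₀ r) ∧
      ball x₀ r ⊆ ⋃ i, ball (y i) (c⁻¹ * (1 + 2 * r / ρ x₀) ^ (-N) * ρ x₀ / 4) ∧
      (∀ i j, i ≠ j →
        Disjoint (ball (y i) (c⁻¹ * (1 + 2 * r / ρ x₀) ^ (-N) * ρ x₀ / 8))
          (ball (y j) (c⁻¹ * (1 + 2 * r / ρ x₀) ^ (-N) * ρ x₀ / 8))) ∧
      ∀ z : Ed d,
        (Finset.univ.filter fun i =>
            z ∈ ball (y i) (c⁻¹ * (1 + 2 * r / ρ x₀) ^ (-N) * ρ x₀ / 4)).card ≤ 5 ^ d := by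
  obtain ⟨hpos, hc, hN, -⟩ := hρ
  have hρ0 : 0 < ρ x₀ := hpos x₀
  have hr0 : 0 < r := hρ0.trans h₁
  set δ : ℝ := c⁻¹ * (1 + 2 * r / ρ x₀) ^ (-N) * ρ x₀ with hδdef
  have hbase : (0:ℝ) < 1 + 2 * r / ρ x₀ := by positivity
  have hδ : 0 < δ := by
    have h1 : (0:ℝ) < c⁻¹ := inv_pos.mpr (lt_of_lt_of_le one_pos hc)
    have h2 : (0:ℝ) < (1 + 2 * r / ρ x₀) ^ (-N) := Real.rpow_pos_of_pos hbase _
    positivity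
  -- Zorn: maximal δ/4-separated subset of the ball
  obtain ⟨M, hM⟩ := zorn_subset
      {T : Set (Ed d) | T ⊆ ball x₀ r ∧ T.Pairwise fun p q => δ / 4 ≤ dist p q} (by
    intro C hC hchain
    refine ⟨⋃₀ C, ⟨?_, ?_⟩, fun s hs => subset_sUnion_of_mem hs⟩
    · exact sUnion_subset fun t ht => (hC ht).1
    · intro p hp q hq hpq
      obtain ⟨t₁, ht₁, hpt⟩ := hp
      obtain ⟨t₂, ht₂, hqt⟩ := hq
      rcases hchain.total ht₁ ht₂ with h | h
      · exact (hC ht₂).2 (h hpt) hqt hpq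
      · exact (hC ht₁).2 hpt (h hqt) hpq)
  obtain ⟨hMball, hMsep⟩ := hM.prop
  -- the maximal set covers the ball at scale δ/4
  have hcover : ∀ z ∈ ball x₀ r, ∃ p ∈ M, dist z p < δ / 4 := by
    intro z hz
    by_contra hcon
    push_neg at hcon
    have hins : insert z M ∈
        {T : Set (Ed d) | T ⊆ ball x₀ r ∧ T.Pairwise fun p q => δ / 4 ≤ dist p q} := by
      constructor
      · exact insert_subset hz hMball
      · refine Set.pairwise_insert.mpr ⟨hMsep, fun p hp hpz => ?_⟩
        refine ⟨hcon p hp, ?_⟩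
        · rw [dist_comm]; exact hcon p hp
    have : insert z M ⊆ M := hM.2 hins (subset_insert _ _)
    have hzM : z ∈ M := this (mem_insert _ _)
    have := hcon z hzM
    simp at this
    linarith
  -- finiteness of M via a packing bound
  set K : ℕ := ⌈(r + δ / 8) / (δ / 8)⌉₊ with hKdef
  have hδ8 : (0:ℝ) < δ / 8 := by linarith
  have hK0 : 0 < K := by
    rw [hKdef]
    have : (0:ℝ) < (r + δ / 8) / (δ / 8) := by positivity
    exact Nat.ceil_pos.mpr this
  have hKbd : r + δ / 4 / 2 ≤ (K : ℝ) * (δ / 4 / 2) := by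
    have h := Nat.le_ceil ((r + δ / 8) / (δ / 8))
    have : r + δ / 8 ≤ (K : ℝ) * (δ / 8) := by
      rw [hKdef]
      calc r + δ / 8 = (r + δ / 8) / (δ / 8) * (δ / 8) := by field_simp
        _ ≤ (⌈(r + δ / 8) / (δ / 8)⌉₊ : ℝ) * (δ / 8) := by
            apply mul_le_mul_of_nonneg_right h hδ8.le
    linarith
  have hbound : ∀ t : Finset (Ed d), ↑t ⊆ M → t.card ≤ K ^ d := by
    intro t ht
    refine card_sep_le t x₀ r (δ / 4) (by linarith) K hK0 hKbd ?_ ?_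
    · intro p hp; exact mem_ball.mp (hMball (ht hp))
    · intro p hp q hq hpq; exact hMsep (ht hp) (ht hq) hpq
  have hMfin : M.Finite := by
    by_contra hinf
    have hinf' : M.Infinite := hinf
    obtain ⟨t, htM, htfin, htcard⟩ := hinf'.exists_subset_ncard_eq (K ^ d + 1)
    have := hbound htfin.toFinset (by simpa using htM)
    rw [Set.ncard_eq_toFinset_card t htfin] at htcard
    omega
  -- enumerate M
  set n : ℕ := hMfin.toFinset.card with hndef
  set e : hMfin.toFinset ≃ Fin n := hMfin.toFinset.equivFin with hedef
  set y : Fin n → Ed d := fun i => ((e.symm i : hMfin.toFinset) : Ed d) with hydef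
  have hyM : ∀ i, y i ∈ M := fun i => hMfin.mem_toFinset.mp (e.symm i).2
  have hyinj : Function.Injective y := by
    intro i j hij
    have : e.symm i = e.symm j := Subtype.ext hij
    exact e.symm.injective this
  refine ⟨n, y, fun i => hMball (hyM i), ?_, ?_, ?_⟩
  · -- covering
    intro z hz
    obtain ⟨p, hpM, hzp⟩ := hcover z hz
    refine mem_iUnion.mpr ⟨e ⟨p, hMfin.mem_toFinset.mpr hpM⟩, ?_⟩
    have : y (e ⟨p, hMfin.mem_toFinset.mpr hpM⟩) = p := by
      simp [hydef]
    rw [mem_ball, this]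
    exact hzp
  · -- disjointness of half balls
    intro i j hij
    have hne : y i ≠ y j := fun h => hij (hyinj h)
    have hd : δ / 4 ≤ dist (y i) (y j) := hMsep (hyM i) (hyM j) hne
    exact ball_disjoint_ball (by linarith)
  · -- overlap bound
    intro z
    set F := Finset.univ.filter fun i => z ∈ ball (y i) (δ / 4) with hFdef
    have himg : (F.image y).card = F.card :=
      Finset.card_image_of_injective _ hyinj
    have h3 : (F.image y).card ≤ 3 ^ d := by
      refine card_sep_le (F.image y) z (δ / 4) (δ / 4) (by linarith) 3 (by norm_num)
        (by norm_num; linarith) ?_ ?_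
      · intro p hp
        obtain ⟨i, hi, rfl⟩ := Finset.mem_image.mp hp
        have := (Finset.mem_filter.mp hi).2
        rw [mem_ball] at this
        rw [dist_comm]
        exact this
      · intro p hp q hq hpq
        obtain ⟨i, hi, rfl⟩ := Finset.mem_image.mp hp
        obtain ⟨j, hj, rfl⟩ := Finset.mem_image.mp hq
        exact hMsep (hyM i) (hyM j) hpq
    calc F.card = (F.image y).card := himg.symm
      _ ≤ 3 ^ d := h3
      _ ≤ 5 ^ d := Nat.pow_le_pow_left (by norm_num) d
end
end

section
/- Let ρ be a critical radius function with constants c_ρ, N₀, let β > 1, and let Q = B(x₀, βρ(x₀)). If B = B(x,r) is any ball with B ∩ Q ≠ ∅ and r < βρ(x₀), then r ≤ γρ(x) where γ = c_ρ² β(1+β)^{N₀} (1 + c_ρ β(1+β)^{N₀})^{N₀}. In particular B is sub-critical for the critical radius function γρ. -/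
open MeasureTheory ENNReal Metric Set
open scoped Classical

noncomputable section

/-- Key step: if `dist a b ≤ K ρ(a)` then `ρ(a) ≤ c (1+K)^N ρ(b)`. -/
lemma crf_key {d : ℕ} (ρ : Ed d → ℝ) (c N : ℝ) (hρ : IsCRF ρ c N)
    (a b : Ed d) (K : ℝ) (hK : 0 ≤ K) (hd : dist a b ≤ K * ρ a) :
    ρ a ≤ c * (1 + K) ^ N * ρ b := by
  obtain ⟨hpos, hc, hN, h⟩ := hρ
  have h1 := (h a b).1
  have hρa := hpos a
  have hcpos : (0:ℝ) < c := by linarith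
  have hq : dist a b / ρ a ≤ K := (div_le_iff₀ hρa).2 (by linarith [hd])
  have hbase : (0:ℝ) < 1 + dist a b / ρ a := by positivity
  have hmono : (1 + K) ^ (-N) ≤ (1 + dist a b / ρ a) ^ (-N) :=
    Real.rpow_le_rpow_of_nonpos hbase (by linarith) (by linarith)
  have h2 : c⁻¹ * ρ a * (1 + K) ^ (-N) ≤ ρ b :=
    le_trans (by
      have := mul_le_mul_of_nonneg_left hmono (le_of_lt (mul_pos (inv_pos.2 hcpos) hρa))
      linarith [this]) h1
  have hPpos : (0:ℝ) < (1 + K) ^ N := Real.rpow_pos_of_pos (by linarith) N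
  rw [Real.rpow_neg (by linarith)] at h2
  calc ρ a = (c * (1 + K) ^ N) * (c⁻¹ * ρ a * ((1 + K) ^ N)⁻¹) := by
        field_simp
    _ ≤ (c * (1 + K) ^ N) * ρ b :=
        mul_le_mul_of_nonneg_left h2 (le_of_lt (mul_pos hcpos hPpos))
    _ = c * (1 + K) ^ N * ρ b := by ring

/-- If `B(x,r)` meets `Q = B(x₀, βρ(x₀))` and `r < βρ(x₀)`, then `r ≤ γρ(x)` with
`γ = c² β(1+β)^{N₀} (1 + cβ(1+β)^{N₀})^{N₀}`; in particular `B(x,r)` is sub-critical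
for `γρ`. -/
theorem ball_meeting_Q_subcritical {d : ℕ} (ρ : Ed d → ℝ) (c N : ℝ)
    (hρ : IsCRF ρ c N) (β : ℝ) (hβ : 1 < β) (x₀ x : Ed d) (r : ℝ) (hr : 0 < r)
    (hmeet : (ball x r ∩ ball x₀ (β * ρ x₀)).Nonempty)
    (hrQ : r < β * ρ x₀) :
    r ≤ c ^ 2 * β * (1 + β) ^ N * (1 + c * β * (1 + β) ^ N) ^ N * ρ x := by
  obtain ⟨z, hz1, hz2⟩ := hmeet
  rw [mem_ball] at hz1 hz2
  have hcrf := hρ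
  obtain ⟨hpos, hc, hN, -⟩ := hρ
  have hβ0 : (0:ℝ) < β := by linarith
  have hP : (0:ℝ) < (1 + β) ^ N := Real.rpow_pos_of_pos (by linarith) N
  have step1 : ρ x₀ ≤ c * (1 + β) ^ N * ρ z := by
    apply crf_key ρ c N hcrf x₀ z β (le_of_lt hβ0)
    rw [dist_comm]; exact le_of_lt hz2
  set M : ℝ := c * β * (1 + β) ^ N with hM
  have hM0 : 0 ≤ M := by positivity
  have hr1 : r ≤ M * ρ z := by
    calc r ≤ β * ρ x₀ := le_of_lt hrQ
      _ ≤ β * (c * (1 + β) ^ N * ρ z) :=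
          mul_le_mul_of_nonneg_left step1 (le_of_lt hβ0)
      _ = M * ρ z := by rw [hM]; ring
  have step2 : ρ z ≤ c * (1 + M) ^ N * ρ x := by
    apply crf_key ρ c N hcrf z x M hM0
    linarith [hz1]
  calc r ≤ M * ρ z := hr1
    _ ≤ M * (c * (1 + M) ^ N * ρ x) := mul_le_mul_of_nonneg_left step2 hM0
    _ = c ^ 2 * β * (1 + β) ^ N * (1 + c * β * (1 + β) ^ N) ^ N * ρ x := by
        rw [hM]; ring
end
end

section
/- Let ρ be a critical radius function, θ > 0, η = θ(N₀+1), and B = B(x₀,r) a ball. Define A_B^η f(x) = (1+r/ρ(x₀))^{-η} (1/|B|) ∫_B |f| · χ_B(x), and M_ρ^θ f(x) = sup_{s>0} (1+s/ρ(x))^{-θ} |B(x,s)|^{-1} ∫_{B(x,s)} |f|. Then A_B^η f(x) ≤ 2^{d+η} c_ρ^θ M_ρ^θ f(x) for every x ∈ ℝ^d and every locally integrable f. -/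
open MeasureTheory ENNReal Metric Set
open scoped Classical

noncomputable section

/-- Average of `|f|` over the ball `B(x,r)` (as an extended nonnegative real). -/
def ballAvg {d : ℕ} (f : Ed d → ℝ) (x : Ed d) (r : ℝ) : ℝ≥0∞ :=
  (volume (ball x r))⁻¹ * ∫⁻ y in ball x r, ENNReal.ofReal |f y|

/-- The local maximal operator `M_ρ^loc`. -/
def Mloc {d : ℕ} (ρ : Ed d → ℝ) (f : Ed d → ℝ) (x : Ed d) : ℝ≥0∞ :=
  ⨆ (r : ℝ) (_ : 0 < r) (_ : r ≤ ρ x), ballAvg f x r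

/-- The maximal operator `M_ρ^θ`. -/
def Mtheta {d : ℕ} (ρ : Ed d → ℝ) (θ : ℝ) (f : Ed d → ℝ) (x : Ed d) : ℝ≥0∞ :=
  ⨆ (r : ℝ) (_ : 0 < r),
    ENNReal.ofReal ((1 + r / ρ x) ^ (-θ)) * ballAvg f x r

/-- The part of `M_ρ^θ` with radii `r ≤ ρ(x)`. -/
def Mtheta1 {d : ℕ} (ρ : Ed d → ℝ) (θ : ℝ) (f : Ed d → ℝ) (x : Ed d) : ℝ≥0∞ :=
  ⨆ (r : ℝ) (_ : 0 < r) (_ : r ≤ ρ x),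
    ENNReal.ofReal ((1 + r / ρ x) ^ (-θ)) * ballAvg f x r

/-- The part of `M_ρ^θ` with radii `r > ρ(x)`. -/
def Mtheta2 {d : ℕ} (ρ : Ed d → ℝ) (θ : ℝ) (f : Ed d → ℝ) (x : Ed d) : ℝ≥0∞ :=
  ⨆ (r : ℝ) (_ : ρ x < r),
    ENNReal.ofReal ((1 + r / ρ x) ^ (-θ)) * ballAvg f x r

/-! For `x ∈ B(x₀, r)` the lower bound in `IsCRF` gives `ρ(x) ≳ ρ(x₀) (1 + r/ρ(x₀))^{-N}`,
so the weight `(1 + 2r/ρ(x))^{-θ}` of the ball `B(x, 2r) ⊇ B(x₀, r)` in `M_ρ^θ f(x)` is at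
least a constant times `(1 + r/ρ(x₀))^{-θ(N+1)}`; doubling the radius costs `2^d` in the
average. -/

theorem IsCRF.one_add_div_le {d : ℕ} {ρ : Ed d → ℝ} {c N : ℝ} (hρ : IsCRF ρ c N)
    {x y : Ed d} {s : ℝ} (hs : 0 ≤ s) (hxy : dist x y ≤ s) :
    1 + s / ρ y ≤ c * (1 + s / ρ x) ^ (N + 1) := by
  obtain ⟨hpos, hc, hN, hcrf⟩ := hρ
  have hρx := hpos x
  set t := s / ρ x with ht
  have ht₀ : 0 ≤ t := by positivity
  have hlow : c⁻¹ * ρ x * (1 + t) ^ (-N) ≤ ρ y := by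
    refine le_trans ?_ (hcrf x y).1
    gcongr c⁻¹ * ρ x * ?_
    exact Real.rpow_le_rpow_of_nonpos (by positivity)
      (add_le_add_right (div_le_div_of_nonneg_right hxy hρx.le) 1) (by linarith)
  have hdiv : s / ρ y ≤ c * (1 + t) ^ N * t := by
    calc s / ρ y ≤ s / (c⁻¹ * ρ x * (1 + t) ^ (-N)) := by gcongr
      _ = c * (1 + t) ^ N * t := by
        rw [Real.rpow_neg (by positivity), ht]
        field_simp
  have hone : 1 ≤ c * (1 + t) ^ N :=
    one_le_mul_of_one_le_of_one_le hc (Real.one_le_rpow (by linarith) (by linarith))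
  calc 1 + s / ρ y ≤ c * (1 + t) ^ N * (1 + t) := by linarith
    _ = c * (1 + t) ^ (N + 1) := by
      rw [Real.rpow_add (by positivity), Real.rpow_one, mul_assoc]

theorem rpow_neg_mul_le_of_le_mul_rpow {a b K θ η : ℝ} (ha : 0 < a) (hb : 0 < b)
    (hθ : 0 ≤ θ) (h : a ≤ K * b ^ η) : b ^ (-(θ * η)) ≤ K ^ θ * a ^ (-θ) := by
  have hbη : 0 < b ^ η := Real.rpow_pos_of_pos hb η
  have hK : 0 < K := pos_of_mul_pos_left (ha.trans_le h) hbη.le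
  calc b ^ (-(θ * η)) = K ^ θ * (K * b ^ η) ^ (-θ) := by
        rw [Real.mul_rpow hK.le hbη.le, ← Real.rpow_mul hb.le, ← mul_assoc,
          ← Real.rpow_add hK, add_neg_cancel, Real.rpow_zero, one_mul, mul_comm η, neg_mul]
    _ ≤ K ^ θ * a ^ (-θ) := mul_le_mul_of_nonneg_left
      (Real.rpow_le_rpow_of_nonpos ha h (neg_nonpos.mpr hθ)) (by positivity)

theorem IsCRF.weight_le_of_dist_le {d : ℕ} {ρ : Ed d → ℝ} {c N θ : ℝ} (hρ : IsCRF ρ c N)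
    (hθ : 0 ≤ θ) {x₀ x : Ed d} {r : ℝ} (hdist : dist x₀ x ≤ r) :
    (1 + r / ρ x₀) ^ (-(θ * (N + 1))) ≤ (2 * c) ^ θ * (1 + 2 * r / ρ x) ^ (-θ) := by
  have hρx₀ := hρ.1 x₀
  have hρx := hρ.1 x
  have hr : 0 ≤ r := dist_nonneg.trans hdist
  refine rpow_neg_mul_le_of_le_mul_rpow (by positivity) (by positivity) hθ ?_
  have hρr := hρ.one_add_div_le hr hdist
  have : 0 ≤ r / ρ x := by positivity
  calc 1 + 2 * r / ρ x ≤ 2 * (1 + r / ρ x) := by rw [mul_div_assoc]; linarith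
    _ ≤ 2 * c * (1 + r / ρ x₀) ^ (N + 1) := by rw [mul_assoc]; gcongr

theorem two_pow_mul_two_mul_rpow_le (d : ℕ) {c θ η : ℝ} (hc : 0 ≤ c) (hθη : θ ≤ η) :
    (2 : ℝ) ^ d * (2 * c) ^ θ ≤ 2 ^ ((d : ℝ) + η) * c ^ θ := by
  rw [Real.mul_rpow zero_le_two hc, ← mul_assoc, ← Real.rpow_natCast, ← Real.rpow_add two_pos]
  gcongr
  exact one_le_two

theorem ballAvg_le_mul_ballAvg {d : ℕ} (f : Ed d → ℝ) {x₀ x : Ed d} {r k : ℝ} (hk : 0 < k)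
    (hsub : ball x₀ r ⊆ ball x (k * r)) :
    ballAvg f x₀ r ≤ ENNReal.ofReal (k ^ d) * ballAvg f x (k * r) := by
  have hvol : volume (ball x (k * r)) = ENNReal.ofReal (k ^ d) * volume (ball x₀ r) := by
    rw [Measure.addHaar_ball_mul_of_pos volume x hk r, finrank_euclideanSpace_fin,
      Measure.addHaar_ball_center volume x₀ r]
  have hk₀ : ENNReal.ofReal (k ^ d) ≠ 0 := by positivity
  unfold ballAvg
  rw [hvol, ENNReal.mul_inv (Or.inl hk₀) (Or.inl ofReal_ne_top), ← mul_assoc, ← mul_assoc,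
    ENNReal.mul_inv_cancel hk₀ ofReal_ne_top, one_mul]
  gcongr

theorem le_Mtheta {d : ℕ} (ρ : Ed d → ℝ) (θ : ℝ) (f : Ed d → ℝ) (x : Ed d) {s : ℝ}
    (hs : 0 < s) : ENNReal.ofReal ((1 + s / ρ x) ^ (-θ)) * ballAvg f x s ≤ Mtheta ρ θ f x :=
  le_iSup₂_of_le s hs le_rfl

theorem avg_le_Mtheta_general {d : ℕ} (ρ : Ed d → ℝ) (c N : ℝ) (hρ : IsCRF ρ c N)
    (θ : ℝ) (hθ : 0 < θ) (x₀ : Ed d) (r : ℝ)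
    (f : Ed d → ℝ) :
    ∀ x : Ed d,
      (ball x₀ r).indicator
          (fun _ => ENNReal.ofReal ((1 + r / ρ x₀) ^ (-(θ * (N + 1)))) *
            ballAvg f x₀ r) x ≤
        ENNReal.ofReal ((2 : ℝ) ^ ((d : ℝ) + θ * (N + 1)) * c ^ θ) *
          Mtheta ρ θ f x := by
  intro x
  by_cases hx : x ∈ ball x₀ r
  swap
  · simp [indicator_of_notMem hx]
  rw [indicator_of_mem hx]
  have hr : 0 < r := pos_of_mem_ball hx
  have hdist : dist x₀ x ≤ r := (mem_ball'.mp hx).le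
  have hweight := hρ.weight_le_of_dist_le hθ.le hdist
  obtain ⟨hpos, hc, hN, -⟩ := hρ
  set w₀ := (1 + r / ρ x₀) ^ (-(θ * (N + 1)))
  set w := (1 + 2 * r / ρ x) ^ (-θ)
  have hw : 0 ≤ w := Real.rpow_nonneg (by have := hpos x; positivity) _
  have hreal : 2 ^ d * w₀ ≤ (2 : ℝ) ^ ((d : ℝ) + θ * (N + 1)) * c ^ θ * w :=
    calc 2 ^ d * w₀ ≤ 2 ^ d * (2 * c) ^ θ * w := by rw [mul_assoc]; gcongr
      _ ≤ _ := mul_le_mul_of_nonneg_right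
        (two_pow_mul_two_mul_rpow_le d (by linarith) (by nlinarith)) hw
  have havg : ballAvg f x₀ r ≤ ENNReal.ofReal (2 ^ d) * ballAvg f x (2 * r) :=
    ballAvg_le_mul_ballAvg f two_pos (ball_subset_ball' (by linarith))
  calc ENNReal.ofReal w₀ * ballAvg f x₀ r
      ≤ ENNReal.ofReal (2 ^ d * w₀) * ballAvg f x (2 * r) := by
        rw [ENNReal.ofReal_mul (by positivity), mul_comm (ENNReal.ofReal (2 ^ d)), mul_assoc]
        exact mul_le_mul_right havg _
    _ ≤ ENNReal.ofReal ((2 : ℝ) ^ ((d : ℝ) + θ * (N + 1)) * c ^ θ * w) *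
          ballAvg f x (2 * r) := by
        gcongr
    _ ≤ _ := by
        rw [ENNReal.ofReal_mul (by positivity), mul_assoc]
        gcongr
        exact le_Mtheta ρ θ f x (by positivity)

/-- The averaging operator `A_B^η` with `η = θ(N₀+1)` is pointwise dominated by
`2^{d+η} c_ρ^θ M_ρ^θ`. -/
theorem avg_le_Mtheta {d : ℕ} (ρ : Ed d → ℝ) (c N : ℝ) (hρ : IsCRF ρ c N)
    (θ : ℝ) (hθ : 0 < θ) (x₀ : Ed d) (r : ℝ) (hr : 0 < r)
    (f : Ed d → ℝ) (hf : LocallyIntegrable f volume) :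
    ∀ x : Ed d,
      (ball x₀ r).indicator
          (fun _ => ENNReal.ofReal ((1 + r / ρ x₀) ^ (-(θ * (N + 1)))) *
            ballAvg f x₀ r) x ≤
        ENNReal.ofReal ((2 : ℝ) ^ ((d : ℝ) + θ * (N + 1)) * c ^ θ) *
          Mtheta ρ θ f x :=
  avg_le_Mtheta_general ρ c N hρ θ hθ x₀ r f
end
end

section
/- Let ρ be a critical radius function with constants c_ρ, N₀, let θ ≥ 0, and define M_{ρ,2}^θ f(x) = sup_{r > ρ(x)} (1+r/ρ(x))^{-θ} |B(x,r)|^{-1} ∫_{B(x,r)} |f|. Then for every x with x ∈ B_k = B(x_k, ρ(x_k)) and every locally integrable f: M_{ρ,2}^θ f(x) ≤ c · sup_{j≥1} 2^{-j(θ+d)} |B_k|^{-1} ∫_{c_j B_k} |f|, where c = c_ρ^d 2^{d(1+N₀)+θ} and c_j = 2^j c_ρ 2^{N₀/(N₀+1)} + 1. -/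
open MeasureTheory ENNReal Metric Set
open scoped Classical

noncomputable section

lemma vol_ball_Ed {d : ℕ} (z : Ed d) {s : ℝ} (hs : 0 < s) :
    volume (ball z s) = ENNReal.ofReal (s ^ (d : ℝ)) * volume (ball (0 : Ed d) 1) := by
  cases d with
  | zero =>
    have h1 : ball z s = (univ : Set (Ed 0)) :=
      eq_univ_of_forall fun y => by simpa [mem_ball, Subsingleton.elim y z] using hs
    have h2 : ball (0 : Ed 0) 1 = (univ : Set (Ed 0)) :=
      eq_univ_of_forall fun y => by simpa [mem_ball, Subsingleton.elim y (0 : Ed 0)] using one_pos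
    simp [h1, h2]
  | succ n =>
    haveI : Nontrivial (Ed (n + 1)) := inferInstance
    rw [Measure.addHaar_ball volume z hs.le]
    congr 2
    rw [← Real.rpow_natCast s]
    congr 1
    simp [finrank_euclideanSpace]

/-- For `x ∈ B_k = B(x_k, ρ(x_k))`, the global part `M_{ρ,2}^θ f(x)` is dominated by
`c ⨆_{j≥1} 2^{-j(θ+d)} |B_k|^{-1} ∫_{c_j B_k} |f|`, where `c = c_ρ^d 2^{d(1+N₀)+θ}`
and `c_j = 2^j c_ρ 2^{N₀/(N₀+1)} + 1`. -/
theorem Mtheta2_le_dyadic {d : ℕ} (ρ : Ed d → ℝ) (c N : ℝ) (hρ : IsCRF ρ c N)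
    (θ : ℝ) (hθ : 0 ≤ θ) (xk : Ed d) (x : Ed d) (hx : x ∈ ball xk (ρ xk))
    (f : Ed d → ℝ) (hf : LocallyIntegrable f volume) :
    Mtheta2 ρ θ f x ≤
      ENNReal.ofReal (c ^ (d : ℝ) * 2 ^ ((d : ℝ) * (1 + N) + θ)) *
        ⨆ (j : ℕ) (_ : 1 ≤ j),
          ENNReal.ofReal ((2 : ℝ) ^ (-(j : ℝ) * (θ + d))) *
            ((volume (ball xk (ρ xk)))⁻¹ *
              ∫⁻ y in ball xk ((2 ^ (j : ℝ) * c * 2 ^ (N / (N + 1)) + 1) * ρ xk),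
                ENNReal.ofReal |f y|) := by
  obtain ⟨hpos, hc, hN, hineq⟩ := hρ
  have hc0 : (0:ℝ) < c := lt_of_lt_of_le one_pos hc
  rw [Mtheta2]
  refine iSup₂_le fun r hr => ?_
  have hρx : 0 < ρ x := hpos x
  have hρk : 0 < ρ xk := hpos xk
  have hr0 : 0 < r := hρx.trans hr
  have ha1 : 1 < r / ρ x := (one_lt_div hρx).mpr hr
  set j : ℕ := ⌈Real.logb 2 (r / ρ x)⌉₊ with hjdef
  have hlogpos : 0 < Real.logb 2 (r / ρ x) := Real.logb_pos one_lt_two ha1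
  have hj1 : 1 ≤ j := Nat.ceil_pos.mpr hlogpos
  have hrle : r ≤ 2 ^ (j : ℝ) * ρ x := by
    have h1 : r / ρ x ≤ 2 ^ (j : ℝ) := by
      calc r / ρ x = 2 ^ Real.logb 2 (r / ρ x) :=
            (Real.rpow_logb two_pos (by norm_num) (by positivity)).symm
        _ ≤ 2 ^ (j : ℝ) :=
            Real.rpow_le_rpow_of_exponent_le one_le_two (Nat.le_ceil _)
    calc r = (r / ρ x) * ρ x := by field_simp
      _ ≤ 2 ^ (j : ℝ) * ρ x := mul_le_mul_of_nonneg_right h1 hρx.le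
  have h2j : (2:ℝ) ^ ((j:ℝ) - 1) < r / ρ x := by
    have h2 : (j : ℝ) - 1 < Real.logb 2 (r / ρ x) := by
      have := Nat.ceil_lt_add_one hlogpos.le
      have hj' : (j : ℝ) < Real.logb 2 (r / ρ x) + 1 := by exact_mod_cast this
      linarith
    calc (2:ℝ) ^ ((j:ℝ) - 1) < 2 ^ Real.logb 2 (r / ρ x) :=
          Real.rpow_lt_rpow_of_exponent_lt one_lt_two h2
      _ = r / ρ x := Real.rpow_logb two_pos (by norm_num) (by positivity)
  have hrgt : 2 ^ ((j:ℝ) - 1) * ρ x < r := by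
    calc (2:ℝ) ^ ((j:ℝ) - 1) * ρ x < (r / ρ x) * ρ x := mul_lt_mul_of_pos_right h2j hρx
      _ = r := by field_simp
  -- distance facts
  have hd : dist xk x < ρ xk := by rw [dist_comm]; exact mem_ball.mp hx
  have hbase0 : (0:ℝ) < 1 + dist xk x / ρ xk := by positivity
  have hbase : 1 + dist xk x / ρ xk ≤ 2 := by
    have : dist xk x / ρ xk ≤ 1 := (div_le_one hρk).mpr hd.le
    linarith
  -- upper and lower bounds on ρ x
  have hup : ρ x ≤ c * 2 ^ (N / (N + 1)) * ρ xk := by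
    have h := (hineq xk x).2
    have h2 : (1 + dist xk x / ρ xk) ^ (N / (N + 1)) ≤ 2 ^ (N / (N + 1)) :=
      Real.rpow_le_rpow hbase0.le hbase (by positivity)
    calc ρ x ≤ c * ρ xk * (1 + dist xk x / ρ xk) ^ (N / (N + 1)) := h
      _ ≤ c * ρ xk * 2 ^ (N / (N + 1)) :=
          mul_le_mul_of_nonneg_left h2 (by positivity)
      _ = c * 2 ^ (N / (N + 1)) * ρ xk := by ring
  have hlo : c⁻¹ * (2:ℝ) ^ (-N) * ρ xk ≤ ρ x := by
    have h := (hineq xk x).1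
    have h2 : (2:ℝ) ^ (-N) ≤ (1 + dist xk x / ρ xk) ^ (-N) :=
      Real.rpow_le_rpow_of_nonpos hbase0 hbase (by linarith)
    calc c⁻¹ * (2:ℝ) ^ (-N) * ρ xk = c⁻¹ * ρ xk * (2:ℝ) ^ (-N) := by ring
      _ ≤ c⁻¹ * ρ xk * (1 + dist xk x / ρ xk) ^ (-N) :=
          mul_le_mul_of_nonneg_left h2 (by positivity)
      _ ≤ ρ x := h
  -- ball inclusion
  have hsub : ball x r ⊆ ball xk ((2 ^ (j:ℝ) * c * 2 ^ (N / (N + 1)) + 1) * ρ xk) := by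
    apply ball_subset_ball'
    have h1 : r ≤ 2 ^ (j:ℝ) * c * 2 ^ (N / (N + 1)) * ρ xk := by
      calc r ≤ 2 ^ (j:ℝ) * ρ x := hrle
        _ ≤ 2 ^ (j:ℝ) * (c * 2 ^ (N / (N + 1)) * ρ xk) :=
            mul_le_mul_of_nonneg_left hup (by positivity)
        _ = 2 ^ (j:ℝ) * c * 2 ^ (N / (N + 1)) * ρ xk := by ring
    have h2 : dist x xk < ρ xk := mem_ball.mp hx
    nlinarith
  -- real volume inequality
  have h1 : ρ xk ≤ c * 2 ^ N * 2 ^ (1 - (j:ℝ)) * r := by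
    have h2 : 2 ^ ((j:ℝ) - 1) * (c⁻¹ * (2:ℝ) ^ (-N) * ρ xk) ≤ r :=
      le_trans (mul_le_mul_of_nonneg_left hlo (by positivity)) hrgt.le
    have h3 := mul_le_mul_of_nonneg_left h2
      (show (0:ℝ) ≤ c * 2 ^ N * 2 ^ (1 - (j:ℝ)) by positivity)
    have e2N : (2:ℝ) ^ N * (2:ℝ) ^ (-N) = 1 := by
      rw [← Real.rpow_add two_pos]; simp
    have e2j : (2:ℝ) ^ (1 - (j:ℝ)) * (2:ℝ) ^ ((j:ℝ) - 1) = 1 := by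
      rw [← Real.rpow_add two_pos]; norm_num
    have ec : c * c⁻¹ = 1 := mul_inv_cancel₀ hc0.ne'
    have e : c * 2 ^ N * 2 ^ (1 - (j:ℝ)) * (2 ^ ((j:ℝ) - 1) * (c⁻¹ * (2:ℝ) ^ (-N) * ρ xk))
        = (c * c⁻¹) * ((2:ℝ) ^ N * (2:ℝ) ^ (-N)) * ((2:ℝ) ^ (1 - (j:ℝ)) * 2 ^ ((j:ℝ) - 1)) * ρ xk := by
      ring
    rw [e, ec, e2N, e2j] at h3
    linarith
  have hvolR : ρ xk ^ (d:ℝ) ≤ (c * 2 ^ N * 2 ^ (1 - (j:ℝ))) ^ (d:ℝ) * r ^ (d:ℝ) := by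
    rw [← Real.mul_rpow (by positivity) hr0.le]
    exact Real.rpow_le_rpow hρk.le h1 (Nat.cast_nonneg d)
  -- ENNReal volume inequality
  set K : ℝ := (c * 2 ^ N * 2 ^ (1 - (j:ℝ))) ^ (d:ℝ) with hKdef
  have hW : (volume (ball x r))⁻¹ ≤
      ENNReal.ofReal K * (volume (ball xk (ρ xk)))⁻¹ := by
    set V := volume (ball (0 : Ed d) 1) with hV
    have hV0 : V ≠ 0 := (measure_ball_pos volume 0 one_pos).ne'
    have hVt : V ≠ ⊤ := measure_ball_lt_top.ne
    rw [vol_ball_Ed x hr0, vol_ball_Ed xk hρk,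
      ENNReal.mul_inv (Or.inr hVt) (Or.inr hV0), ENNReal.mul_inv (Or.inr hVt) (Or.inr hV0),
      ← mul_assoc]
    refine mul_le_mul_left ?_ V⁻¹
    have hrp : (0:ℝ) < r ^ (d:ℝ) := Real.rpow_pos_of_pos hr0 _
    have hkp : (0:ℝ) < ρ xk ^ (d:ℝ) := Real.rpow_pos_of_pos hρk _
    rw [← ENNReal.ofReal_inv_of_pos hrp, ← ENNReal.ofReal_inv_of_pos hkp,
      ← ENNReal.ofReal_mul (by positivity)]
    apply ENNReal.ofReal_le_ofReal
    have h4 : (1:ℝ) / r ^ (d:ℝ) ≤ K / ρ xk ^ (d:ℝ) :=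
      (div_le_div_iff₀ hrp hkp).mpr (by nlinarith)
    calc (r ^ (d:ℝ))⁻¹ = 1 / r ^ (d:ℝ) := (one_div _).symm
      _ ≤ K / ρ xk ^ (d:ℝ) := h4
      _ = K * (ρ xk ^ (d:ℝ))⁻¹ := div_eq_mul_inv _ _
  -- decay factor
  have hB : (1 + r / ρ x) ^ (-θ) ≤ (2:ℝ) ^ θ * 2 ^ (-(j:ℝ) * θ) := by
    have h5 : (2:ℝ) ^ ((j:ℝ) - 1) ≤ 1 + r / ρ x := by linarith
    have h6 : (1 + r / ρ x) ^ (-θ) ≤ ((2:ℝ) ^ ((j:ℝ) - 1)) ^ (-θ) :=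
      Real.rpow_le_rpow_of_nonpos (Real.rpow_pos_of_pos two_pos _) h5 (neg_nonpos.mpr hθ)
    have h7 : ((2:ℝ) ^ ((j:ℝ) - 1)) ^ (-θ) = (2:ℝ) ^ θ * 2 ^ (-(j:ℝ) * θ) := by
      rw [← Real.rpow_mul (by norm_num : (0:ℝ) ≤ 2),
        show ((j:ℝ) - 1) * (-θ) = θ + (-(j:ℝ) * θ) by ring, Real.rpow_add two_pos]
    linarith [h7 ▸ h6]
  -- constants identity
  have hconst : (2:ℝ) ^ θ * 2 ^ (-(j:ℝ) * θ) * K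
      = c ^ (d:ℝ) * 2 ^ ((d:ℝ) * (1 + N) + θ) * 2 ^ (-(j:ℝ) * (θ + (d:ℝ))) := by
    rw [hKdef, Real.mul_rpow (by positivity) (by positivity),
      Real.mul_rpow (by positivity) (by positivity),
      ← Real.rpow_mul (by norm_num : (0:ℝ) ≤ 2), ← Real.rpow_mul (by norm_num : (0:ℝ) ≤ 2)]
    calc (2:ℝ) ^ θ * 2 ^ (-(j:ℝ) * θ) * (c ^ (d:ℝ) * (2:ℝ) ^ (N * (d:ℝ)) * (2:ℝ) ^ ((1 - (j:ℝ)) * (d:ℝ)))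
        = c ^ (d:ℝ) * ((2:ℝ) ^ θ * (2:ℝ) ^ (N * (d:ℝ)) * (2:ℝ) ^ ((1 - (j:ℝ)) * (d:ℝ)) * (2:ℝ) ^ (-(j:ℝ) * θ)) := by
          ring
      _ = c ^ (d:ℝ) * (2:ℝ) ^ (θ + N * (d:ℝ) + (1 - (j:ℝ)) * (d:ℝ) + -(j:ℝ) * θ) := by
          rw [Real.rpow_add two_pos, Real.rpow_add two_pos, Real.rpow_add two_pos]
      _ = c ^ (d:ℝ) * (2:ℝ) ^ (((d:ℝ) * (1 + N) + θ) + -(j:ℝ) * (θ + (d:ℝ))) := by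
          rw [show θ + N * (d:ℝ) + (1 - (j:ℝ)) * (d:ℝ) + -(j:ℝ) * θ
            = ((d:ℝ) * (1 + N) + θ) + -(j:ℝ) * (θ + (d:ℝ)) by ring]
      _ = c ^ (d:ℝ) * 2 ^ ((d:ℝ) * (1 + N) + θ) * 2 ^ (-(j:ℝ) * (θ + (d:ℝ))) := by
          rw [Real.rpow_add two_pos]; ring
  -- assemble
  have hI : (∫⁻ y in ball x r, ENNReal.ofReal |f y|) ≤
      ∫⁻ y in ball xk ((2 ^ (j:ℝ) * c * 2 ^ (N / (N + 1)) + 1) * ρ xk), ENNReal.ofReal |f y| :=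
    lintegral_mono_set hsub
  calc ENNReal.ofReal ((1 + r / ρ x) ^ (-θ)) * ballAvg f x r
      = ENNReal.ofReal ((1 + r / ρ x) ^ (-θ)) *
        ((volume (ball x r))⁻¹ * ∫⁻ y in ball x r, ENNReal.ofReal |f y|) := rfl
    _ ≤ ENNReal.ofReal ((2:ℝ) ^ θ * 2 ^ (-(j:ℝ) * θ)) *
        ((ENNReal.ofReal K * (volume (ball xk (ρ xk)))⁻¹) *
          ∫⁻ y in ball xk ((2 ^ (j:ℝ) * c * 2 ^ (N / (N + 1)) + 1) * ρ xk), ENNReal.ofReal |f y|) :=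
        mul_le_mul' (ENNReal.ofReal_le_ofReal hB) (mul_le_mul' hW hI)
    _ = ENNReal.ofReal (c ^ (d:ℝ) * 2 ^ ((d:ℝ) * (1 + N) + θ)) *
        (ENNReal.ofReal ((2:ℝ) ^ (-(j:ℝ) * (θ + (d:ℝ)))) *
          ((volume (ball xk (ρ xk)))⁻¹ *
            ∫⁻ y in ball xk ((2 ^ (j:ℝ) * c * 2 ^ (N / (N + 1)) + 1) * ρ xk), ENNReal.ofReal |f y|)) := by
        rw [← mul_assoc, ← mul_assoc, ← mul_assoc, ← ENNReal.ofReal_mul (by positivity),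
          hconst, ENNReal.ofReal_mul (by positivity), mul_assoc, mul_assoc]
    _ ≤ ENNReal.ofReal (c ^ (d : ℝ) * 2 ^ ((d : ℝ) * (1 + N) + θ)) *
        ⨆ (j : ℕ) (_ : 1 ≤ j),
          ENNReal.ofReal ((2 : ℝ) ^ (-(j : ℝ) * (θ + d))) *
            ((volume (ball xk (ρ xk)))⁻¹ *
              ∫⁻ y in ball xk ((2 ^ (j : ℝ) * c * 2 ^ (N / (N + 1)) + 1) * ρ xk),
                ENNReal.ofReal |f y|) := by
        refine mul_le_mul_right ?_ _
        exact le_iSup₂ (f := fun (j : ℕ) (_ : 1 ≤ j) =>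
          ENNReal.ofReal ((2 : ℝ) ^ (-(j : ℝ) * (θ + d))) *
            ((volume (ball xk (ρ xk)))⁻¹ *
              ∫⁻ y in ball xk ((2 ^ (j : ℝ) * c * 2 ^ (N / (N + 1)) + 1) * ρ xk),
                ENNReal.ofReal |f y|)) j hj1
end
end
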